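/- arXiv:1405.0123 — 8 statements merged into one kernel-verified Lean document; each statement's English description precedes it below -/
import Mathlib

section
/- Let A be a ring, M a left A-module and S = End_A(M), with endomorphisms written on the right of their arguments so that S acts on the left of Hom-sets by composition. Every cyclic left ideal of S is of the form Hom(M,N) = {f ∈ S : Im(f) ⊆ N} for some submodule N of M if and only if M is semi-projective, i.e., for all f, g ∈ S with Im(g) ⊆ Im(f) there exists h ∈ S such that g = h followed by f (g factors through f). -/
/-!
Since `f = id f` lies in `Sf`, any `N` with `Hom(M,N) = Sf` contains `Im f`, so
`Hom(M, Im f) ⊆ Hom(M,N) = Sf ⊆ Hom(M, Im f)`. Thus `Sf` has the form `Hom(M,N)` exactly when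
`Hom(M, Im f) = Sf`, which says that every `g` with `Im g ⊆ Im f` factors through `f`.
-/

section

open LinearMap

variable {A M : Type*} [Ring A] [AddCommGroup M] [Module A M]

def homInto (N : Submodule A M) : Set (M →ₗ[A] M) := {g | range g ≤ N}

def cyclicLeftIdeal (f : M →ₗ[A] M) : Set (M →ₗ[A] M) := {g | ∃ h : M →ₗ[A] M, g = f.comp h}

theorem homInto_mono {N N' : Submodule A M} (hN : N ≤ N') : homInto N ⊆ homInto N' :=
  fun _ hg => le_trans hg hN

theorem self_mem_cyclicLeftIdeal (f : M →ₗ[A] M) : f ∈ cyclicLeftIdeal f :=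
  ⟨LinearMap.id, rfl⟩

theorem cyclicLeftIdeal_subset_homInto_range (f : M →ₗ[A] M) :
    cyclicLeftIdeal f ⊆ homInto (range f) := by
  rintro _ ⟨h, rfl⟩
  exact range_comp_le_range h f

theorem homInto_range_eq_cyclicLeftIdeal_iff (f : M →ₗ[A] M) :
    homInto (range f) = cyclicLeftIdeal f ↔
      ∀ g : M →ₗ[A] M, range g ≤ range f → ∃ h : M →ₗ[A] M, g = f.comp h :=
  ⟨fun hf g hg => (hf ▸ hg : g ∈ cyclicLeftIdeal f),
    fun H => Set.Subset.antisymm (fun g hg => H g hg) (cyclicLeftIdeal_subset_homInto_range f)⟩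

theorem exists_homInto_eq_cyclicLeftIdeal_iff (f : M →ₗ[A] M) :
    (∃ N : Submodule A M, homInto N = cyclicLeftIdeal f) ↔
      homInto (range f) = cyclicLeftIdeal f := by
  refine ⟨fun ⟨N, hN⟩ => ?_, fun hf => ⟨range f, hf⟩⟩
  have hfN : range f ≤ N := (hN ▸ self_mem_cyclicLeftIdeal f : f ∈ homInto N)
  refine Set.Subset.antisymm ?_ (cyclicLeftIdeal_subset_homInto_range f)
  calc homInto (range f) ⊆ homInto N := homInto_mono hfN
    _ = cyclicLeftIdeal f := hN

end

/-- With endomorphisms written on the right (so that the cyclic left ideal generated by `f`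
consists of the products `hf`, i.e. the compositions `f ∘ h`), every cyclic left ideal of
`S = End_A(M)` is of the form `Hom(M,N) = {g : Im g ⊆ N}` for some submodule `N` of `M`
iff `M` is semi-projective: whenever `Im g ⊆ Im f` there is `h ∈ S` with `g = hf = f ∘ h`. -/
theorem cyclic_ideals_hom_iff_semiProjective {A M : Type*} [Ring A] [AddCommGroup M]
    [Module A M] :
    (∀ f : M →ₗ[A] M, ∃ N : Submodule A M,
        {g : M →ₗ[A] M | LinearMap.range g ≤ N} =
          {g : M →ₗ[A] M | ∃ h : M →ₗ[A] M, g = f.comp h}) ↔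
    (∀ f g : M →ₗ[A] M, LinearMap.range g ≤ LinearMap.range f →
        ∃ h : M →ₗ[A] M, g = f.comp h) :=
  forall_congr' fun f =>
    (exists_homInto_eq_cyclicLeftIdeal_iff f).trans (homInto_range_eq_cyclicLeftIdeal_iff f)
end

section
/- Let A be a ring, M a left A-module and S = End_A(M), with endomorphisms written on the right of their arguments so that S acts on the left of Hom-sets by composition. Every finitely generated left ideal of S is of the form Hom(M,N) = {f ∈ S : Im(f) ⊆ N} for some submodule N of M if and only if M is intrinsically projective, i.e., for every n ∈ ℕ, every A-linear map p : Mⁿ → M and every g ∈ S with Im(g) ⊆ Im(p), there exists an A-linear map h : M → Mⁿ with g = h followed by p. -/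
/-!
The left ideal of `End_A(M)` generated by `f₁, …, fₙ` consists of the endomorphisms factoring
through `p = Σ fᵢ ∘ projᵢ : Mⁿ → M`, whose image is `Σ Im fᵢ`; conversely every `p : Mⁿ → M`
arises from `fᵢ = p ∘ singleᵢ`. If this ideal is `Hom(M, N)`, then `N ⊇ Im fᵢ` for all `i`, so
`N ⊇ Im p` and every `g` with `Im g ⊆ Im p` factors through `p`; conversely, intrinsic
projectivity says exactly that `N = Im p` works.
-/

open LinearMap

namespace LinearMap

variable {R ι M N : Type*} {φ : ι → Type*} [Semiring R] [Fintype ι] [DecidableEq ι]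
  [∀ i, AddCommMonoid (φ i)] [∀ i, Module R (φ i)] [AddCommMonoid M] [Module R M]
  [AddCommMonoid N] [Module R N]

theorem comp_pi_eq_sum_comp_single (p : (Π i, φ i) →ₗ[R] M) (c : ∀ i, N →ₗ[R] φ i) :
    p.comp (pi c) = ∑ i, (p.comp (single R φ i)).comp (c i) := by
  ext x
  simp only [comp_apply, coe_sum, Finset.sum_apply, single_apply, ← map_sum,
    Finset.univ_sum_single]
  rfl

theorem exists_eq_sum_comp_single_comp_iff (p : (Π i, φ i) →ₗ[R] M) (g : N →ₗ[R] M) :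
    (∃ c : ∀ i, N →ₗ[R] φ i, g = ∑ i, (p.comp (single R φ i)).comp (c i)) ↔
      ∃ h : N →ₗ[R] Π i, φ i, g = p.comp h := by
  constructor
  · rintro ⟨c, rfl⟩
    exact ⟨pi c, (comp_pi_eq_sum_comp_single p c).symm⟩
  · rintro ⟨h, rfl⟩
    refine ⟨fun i => (proj i).comp h, ?_⟩
    rw [← comp_pi_eq_sum_comp_single, pi_proj_comp]

theorem range_eq_iSup_range_comp_single (p : (Π i, φ i) →ₗ[R] M) :
    range p = ⨆ i, range (p.comp (single R φ i)) := by
  simp only [range_eq_map p, ← iSup_range_single, Submodule.map_iSup, range_comp]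

end LinearMap

/-- With endomorphisms written on the right (so that the left ideal generated by
`f₁, …, fₙ ∈ S = End_A(M)` consists of the sums `Σ cᵢfᵢ`, i.e. `Σ fᵢ ∘ cᵢ`), every finitely
generated left ideal of `S` is of the form `Hom(M,N) = {g : Im g ⊆ N}` for some submodule
`N` of `M` iff `M` is intrinsically projective: every `g ∈ S` whose image is contained in
the image of some `p : Mⁿ → M` factors through `p`. -/
theorem fg_ideals_hom_iff_intrinsicallyProjective {A M : Type*} [Ring A] [AddCommGroup M]
    [Module A M] :
    (∀ (n : ℕ) (F : Fin n → (M →ₗ[A] M)), ∃ N : Submodule A M,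
        {g : M →ₗ[A] M | LinearMap.range g ≤ N} =
          {g : M →ₗ[A] M | ∃ c : Fin n → (M →ₗ[A] M), g = ∑ i, (F i).comp (c i)}) ↔
    (∀ (n : ℕ) (p : (Fin n → M) →ₗ[A] M) (g : M →ₗ[A] M),
        LinearMap.range g ≤ LinearMap.range p →
          ∃ h : M →ₗ[A] (Fin n → M), g = p.comp h) := by
  constructor
  · intro H n p g hg
    obtain ⟨N, hN⟩ := H n fun i => p.comp (single A (fun _ => M) i)
    have hfactor (f : M →ₗ[A] M) : range f ≤ N ↔ ∃ h, f = p.comp h :=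
      (Set.ext_iff.mp hN f).trans (exists_eq_sum_comp_single_comp_iff p f)
    have hpN : range p ≤ N := by
      rw [range_eq_iSup_range_comp_single]
      exact iSup_le fun i => (hfactor _).2 ⟨single A (fun _ => M) i, rfl⟩
    exact (hfactor g).1 (hg.trans hpN)
  · intro H n F
    obtain ⟨p, rfl⟩ := (lsum A (fun _ => M) ℕ).symm.surjective F
    refine ⟨range p, Set.ext fun g => ?_⟩
    simp only [lsum_symm_apply, Set.mem_ofPred_eq, exists_eq_sum_comp_single_comp_iff]
    exact ⟨H n p g, by rintro ⟨h, rfl⟩; exact range_comp_le_range h p⟩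
end

section
/- Let A be an algebra over a commutative ring R. Then A is a compressible left A^e-module (i.e., for every nonzero two-sided ideal I of A there exists an injective (A,A)-bimodule homomorphism A → I) if and only if A is a prime ring and A has a large centre. -/
/-!
If `f : A → I` is an injective bimodule map, then `f x = f 1 * x = x * f 1`, so `f 1 ∈ I` is a
nonzero central element, and `f 1 * y = f y ≠ 0` for every `y ≠ 0`, which rules out a nonzero
ideal annihilating `I`. Conversely, in a prime ring `x * A * y = 0` forces `x = 0` or `y = 0`
(apply primeness to the ideal generated by `x` and its right annihilator). A central `a` has
`a * b * x = b * (a * x)`, so for `a ≠ 0` the map `x ↦ a * x` is injective: it is the required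
bimodule map into any ideal containing `a`.
-/

def IsPrimeRing (A : Type*) [Ring A] : Prop :=
  ∀ I J : TwoSidedIdeal A, (∀ x ∈ I, ∀ y ∈ J, x * y = 0) → I = ⊥ ∨ J = ⊥

def IsCompressibleBimodule (A : Type*) [Ring A] : Prop :=
  ∀ I : TwoSidedIdeal A, I ≠ ⊥ →
    ∃ f : A →+ A, (∀ a x : A, f (a * x) = a * f x) ∧ (∀ x b : A, f (x * b) = f x * b) ∧
      (∀ x : A, f x ∈ I) ∧ Function.Injective f

def HasLargeCentre (A : Type*) [Ring A] : Prop :=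
  ∀ I : TwoSidedIdeal A, I ≠ ⊥ → ∃ a ∈ I, a ≠ 0 ∧ ∀ b : A, a * b = b * a

section

variable {A : Type*} [Ring A]

namespace TwoSidedIdeal

theorem exists_mem_ne_zero_of_ne_bot {I : TwoSidedIdeal A} (hI : I ≠ ⊥) :
    ∃ x ∈ I, x ≠ 0 := by
  by_contra! h
  exact hI <| eq_bot_iff.mpr fun x hx ↦ (mem_bot A).mpr (h x hx)

def rightAnnihilator (I : TwoSidedIdeal A) : TwoSidedIdeal A :=
  .mk' {y | ∀ x ∈ I, x * y = 0}
    (fun x _ ↦ mul_zero x)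
    (fun hy hz x hx ↦ by rw [mul_add, hy x hx, hz x hx, add_zero])
    (fun hy x hx ↦ by rw [mul_neg, hy x hx, neg_zero])
    (fun {c _} hy x hx ↦ by rw [← mul_assoc, hy _ (I.mul_mem_right x c hx)])
    (fun {_ c} hy x hx ↦ by rw [← mul_assoc, hy x hx, zero_mul])

theorem mem_rightAnnihilator {I : TwoSidedIdeal A} {y : A} :
    y ∈ I.rightAnnihilator ↔ ∀ x ∈ I, x * y = 0 :=
  mem_mk' _ _ _ _ _ _ y

theorem mem_rightAnnihilator_span_singleton {x y : A} (h : ∀ b, x * b * y = 0) :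
    y ∈ (span {x}).rightAnnihilator := by
  rw [mem_rightAnnihilator]
  intro u hu
  -- The stronger claim `u * c * y = 0` for all `c` is what survives right multiplication.
  suffices ∀ c, u * c * y = 0 by simpa using this 1
  induction hu using span_induction with
  | mem x' hx' => rw [Set.mem_singleton_iff.mp hx']; exact h
  | zero => simp
  | add u v _ _ hu hv => intro c; rw [add_mul, add_mul, hu, hv, add_zero]
  | neg u _ hu => intro c; rw [neg_mul, neg_mul, hu, neg_zero]
  | left_absorb a u _ hu => intro c; rw [mul_assoc a, mul_assoc a, hu, mul_zero]
  | right_absorb b u _ hu => intro c; rw [mul_assoc u, hu]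

end TwoSidedIdeal

open TwoSidedIdeal in
theorem IsPrimeRing.eq_zero_or_eq_zero_of_mul_mul_eq_zero (hA : IsPrimeRing A) {x y : A}
    (h : ∀ b, x * b * y = 0) : x = 0 ∨ y = 0 := by
  have hx : x ∈ span {x} := subset_span rfl
  have hy := mem_rightAnnihilator_span_singleton h
  rcases hA _ (span {x}).rightAnnihilator fun u hu v hv ↦ mem_rightAnnihilator.mp hv u hu
    with hbot | hbot
  · rw [hbot, mem_bot] at hx
    exact .inl hx
  · rw [hbot, mem_bot] at hy
    exact .inr hy

theorem IsPrimeRing.mul_left_injective_of_central (hA : IsPrimeRing A) {a : A} (ha : a ≠ 0)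
    (hcomm : ∀ b, a * b = b * a) : Function.Injective (a * ·) := by
  intro x y (hxy : a * x = a * y)
  rw [← sub_eq_zero]
  refine (hA.eq_zero_or_eq_zero_of_mul_mul_eq_zero fun b ↦ ?_).resolve_left ha
  rw [hcomm b, mul_assoc, mul_sub, hxy, sub_self, mul_zero]

theorem eq_apply_one_mul_of_map_mul_right {f : A → A} (hr : ∀ x b, f (x * b) = f x * b)
    (x : A) : f x = f 1 * x := by
  rw [← hr, one_mul]

theorem apply_one_mul_comm {f : A → A} (hl : ∀ a x, f (a * x) = a * f x)
    (hr : ∀ x b, f (x * b) = f x * b) (b : A) : f 1 * b = b * f 1 := by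
  rw [← hr, ← hl, one_mul, mul_one]

open TwoSidedIdeal in
theorem IsCompressibleBimodule.isPrimeRing (h : IsCompressibleBimodule A) : IsPrimeRing A := by
  intro I J hIJ
  refine or_iff_not_imp_left.mpr fun hI ↦ eq_bot_iff.mpr fun y hy ↦ ?_
  obtain ⟨f, -, hr, hmem, hinj⟩ := h I hI
  refine (mem_bot A).mpr (hinj ?_)
  rw [map_zero, eq_apply_one_mul_of_map_mul_right hr, hIJ _ (hmem 1) y hy]

theorem IsCompressibleBimodule.hasLargeCentre (h : IsCompressibleBimodule A) :
    HasLargeCentre A := by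
  intro I hI
  obtain ⟨f, hl, hr, hmem, hinj⟩ := h I hI
  refine ⟨f 1, hmem 1, fun h0 ↦ ?_, apply_one_mul_comm hl hr⟩
  obtain ⟨y, -, hy⟩ := TwoSidedIdeal.exists_mem_ne_zero_of_ne_bot hI
  exact hy (hinj (by rw [eq_apply_one_mul_of_map_mul_right hr, h0, zero_mul, map_zero]))

theorem IsPrimeRing.isCompressibleBimodule (hA : IsPrimeRing A) (hcentre : HasLargeCentre A) :
    IsCompressibleBimodule A := by
  intro I hI
  obtain ⟨a, haI, ha0, hcomm⟩ := hcentre I hI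
  refine ⟨.mulLeft a, fun b x ↦ ?_, fun x b ↦ (mul_assoc a x b).symm,
    fun x ↦ I.mul_mem_right a x haI, hA.mul_left_injective_of_central ha0 hcomm⟩
  change a * (b * x) = b * (a * x)
  rw [← mul_assoc, hcomm, mul_assoc]

end

theorem bimodule_compressible_iff_prime_large_centre_general {A : Type*} [Ring A] :
    (∀ I : TwoSidedIdeal A, I ≠ ⊥ →
      ∃ f : A →+ A, (∀ a x : A, f (a * x) = a * f x) ∧ (∀ x b : A, f (x * b) = f x * b) ∧
        (∀ x : A, f x ∈ I) ∧ Function.Injective f) ↔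
    ((∀ I J : TwoSidedIdeal A, (∀ x ∈ I, ∀ y ∈ J, x * y = 0) → I = ⊥ ∨ J = ⊥) ∧
      (∀ I : TwoSidedIdeal A, I ≠ ⊥ → ∃ a ∈ I, a ≠ 0 ∧ ∀ b : A, a * b = b * a)) :=
  show IsCompressibleBimodule A ↔ IsPrimeRing A ∧ HasLargeCentre A from
    ⟨fun h ↦ ⟨h.isPrimeRing, h.hasLargeCentre⟩,
      fun ⟨hA, hcentre⟩ ↦ hA.isCompressibleBimodule hcentre⟩

/-- An `R`-algebra `A` is a compressible left `A^e`-module (every nonzero two-sided ideal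
`I` of `A` admits an injective `(A,A)`-bimodule homomorphism `A → I`) iff `A` is a prime
ring with a large centre. -/
theorem bimodule_compressible_iff_prime_large_centre {R A : Type*} [CommRing R] [Ring A]
    [Algebra R A] :
    (∀ I : TwoSidedIdeal A, I ≠ ⊥ →
      ∃ f : A →+ A, (∀ a x : A, f (a * x) = a * f x) ∧ (∀ x b : A, f (x * b) = f x * b) ∧
        (∀ x : A, f x ∈ I) ∧ Function.Injective f) ↔
    ((∀ I J : TwoSidedIdeal A, (∀ x ∈ I, ∀ y ∈ J, x * y = 0) → I = ⊥ ∨ J = ⊥) ∧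
      (∀ I : TwoSidedIdeal A, I ≠ ⊥ → ∃ a ∈ I, a ≠ 0 ∧ ∀ b : A, a * b = b * a)) :=
  bimodule_compressible_iff_prime_large_centre_general
end

section
/- (Borges–Lomp) Let ∂ be a locally nilpotent derivation of an algebra A over a commutative ring R, and suppose the ring of constants A^∂ = ker(∂) is a domain. Then A is a compressible left A[x;∂]-module; concretely, for every nonzero ∂-stable left ideal I of A there exists c ∈ I with ∂(c) = 0 such that the map A → I sending a to a·c is injective. -/
/-!
Every nonzero `a` has a last nonzero iterate `(∂ ^ k) a`, which is a constant. Starting from a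
nonzero `x ∈ I`, take `c` to be this last iterate; it lies in `I` by `∂`-stability. If `a * c = 0`
with `a ≠ 0`, then since `∂ c = 0` we get `(∂ ^ k) a * c = (∂ ^ k) (a * c) = 0` for every `k`,
and choosing `k` so that `(∂ ^ k) a` is a nonzero constant contradicts `A^∂` being a domain.
-/

namespace Module.End

variable {R M : Type*} [Semiring R] [AddCommMonoid M] [Module R M]

theorem exists_pow_apply_ne_zero_and_apply_pow_apply_eq_zero {f : End R M} {n : ℕ} {a : M}
    (hn : (f ^ n) a = 0) (ha : a ≠ 0) : ∃ k, (f ^ k) a ≠ 0 ∧ f ((f ^ k) a) = 0 := by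
  induction n generalizing a with
  | zero => exact absurd hn ha
  | succ n ih =>
    by_cases hfa : f a = 0
    · exact ⟨0, ha, hfa⟩
    · rw [pow_succ, mul_apply] at hn
      obtain ⟨k, hk, hfk⟩ := ih hn hfa
      exact ⟨k + 1, by rwa [pow_succ, mul_apply], by rwa [pow_succ, mul_apply]⟩

end Module.End

section LocallyNilpotentDerivation

variable {R A : Type*} [CommRing R] [Ring A] [Algebra R A] {d : A →ₗ[R] A}

theorem pow_apply_mul_of_apply_eq_zero (hleib : ∀ a b : A, d (a * b) = d a * b + a * d b)
    {c : A} (hc : d c = 0) (m : ℕ) (a : A) : (d ^ m) (a * c) = (d ^ m) a * c := by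
  induction m generalizing a with
  | zero => rfl
  | succ m ih => rw [pow_succ, Module.End.mul_apply, hleib, hc, mul_zero, add_zero, ih]; rfl

theorem isRightRegular_of_apply_eq_zero (hleib : ∀ a b : A, d (a * b) = d a * b + a * d b)
    (hln : ∀ a : A, ∃ n : ℕ, (d ^ n) a = 0)
    (hdom : ∀ x y : A, d x = 0 → d y = 0 → x * y = 0 → x = 0 ∨ y = 0)
    {c : A} (hc : d c = 0) (hc0 : c ≠ 0) : IsRightRegular c := by
  refine isRightRegular_of_non_zero_divisor c fun a hac => ?_
  by_contra ha
  obtain ⟨n, hn⟩ := hln a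
  obtain ⟨k, hk, hdk⟩ := Module.End.exists_pow_apply_ne_zero_and_apply_pow_apply_eq_zero hn ha
  have hkc : (d ^ k) a * c = 0 := by
    rw [← pow_apply_mul_of_apply_eq_zero hleib hc, hac, map_zero]
  exact (hdom _ _ hdk hc hkc).elim hk hc0

end LocallyNilpotentDerivation

theorem compressible_of_locallyNilpotent_constants_domain_general {R A : Type*} [CommRing R]
    [Ring A] [Algebra R A] (d : A →ₗ[R] A)
    (hleib : ∀ a b : A, d (a * b) = d a * b + a * d b)
    (hln : ∀ a : A, ∃ n : ℕ, (d ^ n) a = 0)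
    (hdom : ∀ x y : A, d x = 0 → d y = 0 → x * y = 0 → x = 0 ∨ y = 0) :
    ∀ I : Ideal A, (∀ x ∈ I, d x ∈ I) → I ≠ ⊥ →
      ∃ c ∈ I, d c = 0 ∧ Function.Injective (fun a : A => a * c) := by
  intro I hstab hI
  obtain ⟨x, hxI, hx0⟩ := (Submodule.ne_bot_iff I).mp hI
  obtain ⟨n, hn⟩ := hln x
  obtain ⟨k, hk, hdk⟩ := Module.End.exists_pow_apply_ne_zero_and_apply_pow_apply_eq_zero hn hx0
  have hkI : (d ^ k) x ∈ I := by
    rw [Module.End.pow_apply]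
    exact Set.MapsTo.iterate (f := d) hstab k hxI
  exact ⟨_, hkI, hdk, isRightRegular_of_apply_eq_zero hleib hln hdom hdk hk⟩

/-- Borges–Lomp: if `∂` is a locally nilpotent derivation of an `R`-algebra `A` whose ring
of constants `A^∂ = ker ∂` is a domain, then `A` is a compressible left `A[x;∂]`-module:
every nonzero `∂`-stable left ideal `I` of `A` contains a constant `c` such that right
multiplication by `c` is an injective map `A → I`. -/
theorem compressible_of_locallyNilpotent_constants_domain {R A : Type*} [CommRing R]
    [Ring A] [Algebra R A] (d : A →ₗ[R] A)
    (hleib : ∀ a b : A, d (a * b) = d a * b + a * d b)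
    (hln : ∀ a : A, ∃ n : ℕ, (d ^ n) a = 0)
    (hnontriv : (1 : A) ≠ 0)
    (hdom : ∀ x y : A, d x = 0 → d y = 0 → x * y = 0 → x = 0 ∨ y = 0) :
    ∀ I : Ideal A, (∀ x ∈ I, d x ∈ I) → I ≠ ⊥ →
      ∃ c ∈ I, d c = 0 ∧ Function.Injective (fun a : A => a * c) :=
  compressible_of_locallyNilpotent_constants_domain_general d hleib hln hdom
end

section
/- (Borges–Lomp) Let A be an algebra over a field k of characteristic zero and ∂ a locally nilpotent derivation of A such that ∂(a) = 1 for some a ∈ A. Then the ring of constants A^∂ = ker(∂) is a left Ore domain if and only if A is a left Ore domain. -/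
/-!
Local nilpotence gives every nonzero `x` a degree `n` (`∂ⁿ x ≠ 0 = ∂ⁿ⁺¹ x`), and its leading
coefficient `∂ⁿ x` is a constant. By the Leibniz rule the leading coefficient of `x * y` is
`(n + m).choose n` times the product of the leading coefficients, so in characteristic zero `A`
is a domain, with additive degree, as soon as `A^∂` is.

For the Ore condition in `A`, let `deg p = l + m ≥ deg q = m`. Then `aˡ q` also has degree `l + m`,
with leading coefficient a nonzero integer multiple of that of `q`. A common left multiple of the
two leading coefficients in `A^∂` yields constants `x ≠ 0, y` with `deg (x p - y aˡ q) < deg p`,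
and we descend on `deg p + deg q`. Conversely, applying `∂ⁿ`, `n = deg x`, to `x u = y v` with
`u, v` constants gives the common left multiple `∂ⁿx u = ∂ⁿy v` in `A^∂`.
-/

open Finset
open scoped Nat

namespace Leibniz

variable {R A : Type*} [Semiring R] [Ring A] [Module R A] {d : A →ₗ[R] A}

def HasDegree (d : A →ₗ[R] A) (x : A) (n : ℕ) : Prop :=
  (d ^ n) x ≠ 0 ∧ (d ^ (n + 1)) x = 0

theorem pow_succ_apply_eq (n : ℕ) (x : A) : (d ^ (n + 1)) x = d ((d ^ n) x) := by
  rw [pow_succ', Module.End.mul_apply]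

theorem HasDegree.ne_zero {x : A} {n : ℕ} (hx : HasDegree d x n) : x ≠ 0 := by
  rintro rfl
  exact hx.1 (map_zero _)

theorem HasDegree.map_pow_apply {x : A} {n : ℕ} (hx : HasDegree d x n) : d ((d ^ n) x) = 0 := by
  rw [← pow_succ_apply_eq, hx.2]

theorem exists_hasDegree_lt {x : A} (hx : x ≠ 0) {N : ℕ} (hN : (d ^ N) x = 0) :
    ∃ n < N, HasDegree d x n := by
  induction N with
  | zero => exact absurd hN hx
  | succ N ih =>
    by_cases h : (d ^ N) x = 0
    · obtain ⟨n, hn, hdeg⟩ := ih h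
      exact ⟨n, by omega, hdeg⟩
    · exact ⟨N, by omega, h, hN⟩

theorem exists_hasDegree (hln : ∀ x : A, ∃ n : ℕ, (d ^ n) x = 0) {x : A} (hx : x ≠ 0) :
    ∃ n, HasDegree d x n :=
  let ⟨_, hN⟩ := hln x
  let ⟨n, _, hn⟩ := exists_hasDegree_lt hx hN
  ⟨n, hn⟩

theorem pow_apply_mul_pow_apply_eq_zero {x y : A} {n m i j : ℕ} (hx : (d ^ (n + 1)) x = 0)
    (hy : (d ^ (m + 1)) y = 0) (h : n < i ∨ m < j) : (d ^ i) x * (d ^ j) y = 0 := by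
  rcases h with h | h
  · rw [Module.End.pow_map_zero_of_le h hx, zero_mul]
  · rw [Module.End.pow_map_zero_of_le h hy, mul_zero]

variable (hd : ∀ x y : A, d (x * y) = d x * y + x * d y)
include hd

theorem map_one_eq_zero : d 1 = 0 := by
  simpa using hd 1 1

theorem pow_apply_const_mul {c : A} (hc : d c = 0) (n : ℕ) (y : A) :
    (d ^ n) (c * y) = c * (d ^ n) y := by
  induction n generalizing y with
  | zero => rfl
  | succ n ih => rw [pow_succ_apply_eq, pow_succ_apply_eq, ih, hd, hc, zero_mul, zero_add]

theorem pow_apply_mul_const {c : A} (hc : d c = 0) (n : ℕ) (x : A) :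
    (d ^ n) (x * c) = (d ^ n) x * c := by
  induction n generalizing x with
  | zero => rfl
  | succ n ih => rw [pow_succ_apply_eq, pow_succ_apply_eq, ih, hd, hc, mul_zero, add_zero]

theorem pow_apply_mul (n : ℕ) (x y : A) :
    (d ^ n) (x * y) = ∑ ij ∈ antidiagonal n, n.choose ij.1 • ((d ^ ij.1) x * (d ^ ij.2) y) := by
  induction n with
  | zero => simp
  | succ n ih =>
    rw [sum_antidiagonal_choose_succ_nsmul (fun i j => (d ^ i) x * (d ^ j) y), pow_succ_apply_eq,
      ih, map_sum]
    simp only [map_nsmul, hd, ← pow_succ_apply_eq, smul_add, sum_add_distrib]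
    rw [add_comm]
    congr 1
    refine sum_congr rfl fun ij hij => ?_
    rw [Nat.choose_symm_of_eq_add (mem_antidiagonal.1 hij).symm]

theorem pow_apply_mul_eq_zero {x y : A} {n m N : ℕ} (hx : (d ^ (n + 1)) x = 0)
    (hy : (d ^ (m + 1)) y = 0) (hN : n + m < N) : (d ^ N) (x * y) = 0 := by
  rw [pow_apply_mul hd]
  refine sum_eq_zero fun ij hij => ?_
  have := mem_antidiagonal.1 hij
  rw [pow_apply_mul_pow_apply_eq_zero hx hy (by omega), smul_zero]

theorem pow_add_apply_mul {x y : A} {n m : ℕ} (hx : (d ^ (n + 1)) x = 0)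
    (hy : (d ^ (m + 1)) y = 0) :
    (d ^ (n + m)) (x * y) = (n + m).choose n • ((d ^ n) x * (d ^ m) y) := by
  rw [pow_apply_mul hd]
  refine sum_eq_single (n, m) (fun ij hij hne => ?_) fun h => (h (mem_antidiagonal.2 rfl)).elim
  have := mem_antidiagonal.1 hij
  have : n < ij.1 ∨ m < ij.2 := by
    by_contra! h
    exact hne (Prod.ext (by omega) (by omega))
  rw [pow_apply_mul_pow_apply_eq_zero hx hy this, smul_zero]

theorem pow_apply_pow_of_map_eq_one {a : A} (ha : d a = 1) (l : ℕ) :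
    (d ^ (l + 1)) (a ^ l) = 0 ∧ (d ^ l) (a ^ l) = l ! • 1 := by
  have ha2 : (d ^ (1 + 1)) a = 0 := by rw [pow_succ_apply_eq, pow_one, ha, map_one_eq_zero hd]
  induction l with
  | zero => simp [map_one_eq_zero hd]
  | succ l ih =>
    rw [pow_succ' a l]
    refine ⟨pow_apply_mul_eq_zero hd ha2 ih.1 (by omega), ?_⟩
    rw [add_comm l 1, pow_add_apply_mul hd ha2 ih.1, pow_one, ha, ih.2, one_mul, smul_smul,
      Nat.choose_one_right, add_comm 1 l, ← Nat.factorial_succ]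

theorem pow_apply_pow_mul {a q : A} (ha : d a = 1) {l m : ℕ} (hq : (d ^ (m + 1)) q = 0) :
    (d ^ (l + m + 1)) (a ^ l * q) = 0 ∧
      (d ^ (l + m)) (a ^ l * q) = ((l + m).choose l * l !) • (d ^ m) q := by
  obtain ⟨hal, hal'⟩ := pow_apply_pow_of_map_eq_one hd ha l
  refine ⟨pow_apply_mul_eq_zero hd hal hq (by omega), ?_⟩
  rw [pow_add_apply_mul hd hal hq, hal', smul_mul_assoc, one_mul, smul_smul]

theorem exists_const_left_common_multiple [NoZeroDivisors A] {u v x y : A} {n : ℕ}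
    (hu : d u = 0) (hv : d v = 0) (hv0 : v ≠ 0) (hx : HasDegree d x n) (hxy : x * u = y * v) :
    ∃ x' y' : A, d x' = 0 ∧ d y' = 0 ∧ x' * u = y' * v ∧ x' ≠ 0 := by
  have hpow (j : ℕ) : (d ^ j) x * u = (d ^ j) y * v := by
    rw [← pow_apply_mul_const hd hu, ← pow_apply_mul_const hd hv, hxy]
  have hy : (d ^ (n + 1)) y = 0 := by
    have := hpow (n + 1)
    rw [hx.2, zero_mul, eq_comm, mul_eq_zero] at this
    exact this.resolve_right hv0
  exact ⟨_, _, hx.map_pow_apply, by rw [← pow_succ_apply_eq, hy], hpow n, hx.1⟩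

section TorsionFree

variable [IsAddTorsionFree A]
  (hB : ∀ x y : A, d x = 0 → d y = 0 → x * y = 0 → x = 0 ∨ y = 0)
include hB

theorem HasDegree.mul {x y : A} {n m : ℕ} (hx : HasDegree d x n) (hy : HasDegree d y m) :
    HasDegree d (x * y) (n + m) := by
  refine ⟨?_, pow_apply_mul_eq_zero hd hx.2 hy.2 (by omega)⟩
  rw [pow_add_apply_mul hd hx.2 hy.2, Ne, nsmul_eq_zero_iff, not_or]
  refine ⟨fun h => ?_, (Nat.choose_pos (Nat.le_add_right n m)).ne'⟩
  rcases hB _ _ hx.map_pow_apply hy.map_pow_apply h with h | h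
  exacts [hx.1 h, hy.1 h]

theorem noZeroDivisors (hln : ∀ x : A, ∃ n : ℕ, (d ^ n) x = 0) : NoZeroDivisors A where
  eq_zero_or_eq_zero_of_mul_eq_zero {x y} hxy := by
    by_contra! h
    obtain ⟨n, hn⟩ := exists_hasDegree hln h.1
    obtain ⟨m, hm⟩ := exists_hasDegree hln h.2
    exact (hn.mul hd hB hm).ne_zero hxy

end TorsionFree

variable [IsAddTorsionFree A]
  (hBore : ∀ u v : A, d u = 0 → d v = 0 → u ≠ 0 → v ≠ 0 →
    ∃ x y : A, d x = 0 ∧ d y = 0 ∧ x * u = y * v ∧ x * u ≠ 0)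
  {a : A} (ha : d a = 1)
include hBore ha

theorem exists_pow_apply_sub_eq_zero {p q : A} {l m : ℕ} (hp : HasDegree d p (l + m))
    (hq : HasDegree d q m) : ∃ x y : A, x ≠ 0 ∧ (d ^ (l + m)) (x * p - y * (a ^ l * q)) = 0 := by
  obtain ⟨-, hw⟩ := pow_apply_pow_mul hd ha (l := l) hq.2
  have hc : (l + m).choose l * l ! ≠ 0 :=
    Nat.mul_ne_zero (Nat.choose_pos (Nat.le_add_right l m)).ne' (Nat.factorial_ne_zero l)
  obtain ⟨x, y, hx, hy, hxy, hne⟩ := hBore _ (((l + m).choose l * l !) • (d ^ m) q)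
    hp.map_pow_apply (by rw [map_nsmul, hq.map_pow_apply, smul_zero]) hp.1
    (by rw [Ne, nsmul_eq_zero_iff, not_or]; exact ⟨hq.1, hc⟩)
  refine ⟨x, y, left_ne_zero_of_mul hne, ?_⟩
  rw [map_sub, pow_apply_const_mul hd hx, pow_apply_const_mul hd hy, hw, hxy, sub_self]

theorem exists_left_common_multiple [NoZeroDivisors A] {p q : A} {n m : ℕ}
    (hp : HasDegree d p n) (hq : HasDegree d q m) : ∃ x y : A, x ≠ 0 ∧ x * p = y * q := by
  induction hN : n + m using Nat.strong_induction_on generalizing p q n m with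
  | _ N ih =>
  wlog hmn : m ≤ n generalizing p q n m
  · obtain ⟨x, y, hx, hxy⟩ := this hq hp (by omega) (by omega)
    have hy : y ≠ 0 := by
      rintro rfl
      exact mul_ne_zero hx hq.ne_zero (by rw [hxy, zero_mul])
    exact ⟨y, x, hy, hxy.symm⟩
  obtain ⟨l, rfl⟩ := Nat.exists_eq_add_of_le' hmn
  obtain ⟨x, y, hx, hr⟩ := exists_pow_apply_sub_eq_zero hd hBore ha hp hq
  by_cases hr0 : x * p - y * (a ^ l * q) = 0
  · exact ⟨x, y * a ^ l, hx, by rw [mul_assoc]; exact sub_eq_zero.1 hr0⟩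
  obtain ⟨k, hk, hrk⟩ := exists_hasDegree_lt hr0 hr
  obtain ⟨u, v, hu, huv⟩ := ih (k + m) (by omega) hrk hq rfl
  refine ⟨u * x, v + u * (y * a ^ l), mul_ne_zero hu hx, ?_⟩
  calc u * x * p = u * (x * p - y * (a ^ l * q)) + u * (y * a ^ l) * q := by noncomm_ring
    _ = (v + u * (y * a ^ l)) * q := by rw [huv, add_mul]

end Leibniz

open Leibniz

/-- Borges–Lomp: let `A` be an algebra over a field `k` of characteristic zero and `∂` a
locally nilpotent derivation of `A` with `∂(a) = 1` for some `a ∈ A`. Then the ring of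
constants `A^∂ = ker ∂` is a left Ore domain iff `A` is a left Ore domain. -/
theorem constants_leftOre_iff_leftOre {k A : Type*} [Field k] [CharZero k] [Ring A]
    [Algebra k A] (d : A →ₗ[k] A)
    (hleib : ∀ a b : A, d (a * b) = d a * b + a * d b)
    (hln : ∀ a : A, ∃ n : ℕ, (d ^ n) a = 0)
    (a : A) (ha : d a = 1) :
    (((1 : A) ≠ 0 ∧ ∀ x y : A, d x = 0 → d y = 0 → x * y = 0 → x = 0 ∨ y = 0) ∧
      ∀ u v : A, d u = 0 → d v = 0 → u ≠ 0 → v ≠ 0 →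
        ∃ x y : A, d x = 0 ∧ d y = 0 ∧ x * u = y * v ∧ x * u ≠ 0) ↔
    (((1 : A) ≠ 0 ∧ ∀ x y : A, x * y = 0 → x = 0 ∨ y = 0) ∧
      ∀ u v : A, u ≠ 0 → v ≠ 0 → ∃ x y : A, x * u = y * v ∧ x * u ≠ 0) := by
  constructor
  · rintro ⟨⟨h10, hBdom⟩, hBore⟩
    have : IsAddTorsionFree A := .of_isTorsionFree k A
    have : NoZeroDivisors A := noZeroDivisors hleib hBdom hln
    refine ⟨⟨h10, fun x y => mul_eq_zero.1⟩, fun p q hp hq => ?_⟩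
    obtain ⟨n, hpn⟩ := exists_hasDegree hln hp
    obtain ⟨m, hqm⟩ := exists_hasDegree hln hq
    obtain ⟨x, y, hx, hxy⟩ := exists_left_common_multiple hleib hBore ha hpn hqm
    exact ⟨x, y, hxy, mul_ne_zero hx hp⟩
  · rintro ⟨⟨h10, hAdom⟩, hAore⟩
    have : NoZeroDivisors A := ⟨hAdom _ _⟩
    refine ⟨⟨h10, fun x y _ _ => mul_eq_zero.1⟩, fun u v hu hv hu0 hv0 => ?_⟩
    obtain ⟨x, y, hxy, hne⟩ := hAore u v hu0 hv0
    obtain ⟨n, hxn⟩ := exists_hasDegree hln (left_ne_zero_of_mul hne)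
    obtain ⟨x', y', hx', hy', hxy', hx'0⟩ :=
      exists_const_left_common_multiple hleib hu hv hv0 hxn hxy
    exact ⟨x', y', hx', hy', hxy', mul_ne_zero hx'0 hu0⟩
end

section
/- (Goodearl's example) Let k be a field of characteristic zero, A = k[[t]] the power series ring, and ∂ : A → A the k-linear map with ∂(Σₙ aₙtⁿ) = Σₙ n aₙtⁿ. Then: (i) ∂ is a derivation of A; (ii) ker(∂) = k (the constant series); (iii) for every m ≥ 1 and a ∈ A, if ∂(a) ∈ tᵐA then a ∈ k + tᵐA; (iv) the ideal tA is a nonzero ∂-stable ideal with tA ∩ ker(∂) = 0, so A is not a retractable left A[x;∂]-module. -/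
/-- The Euler derivation `∂(Σ aₙ tⁿ) = Σ n aₙ tⁿ` on the power series ring `k[[t]]`. -/
noncomputable def eulerD (k : Type*) [Field k] : PowerSeries k →ₗ[k] PowerSeries k where
  toFun f := PowerSeries.mk fun n => (n : k) * PowerSeries.coeff n f
  map_add' f g := by
    ext n
    simp [mul_add]
  map_smul' c f := by
    ext n
    simp [PowerSeries.coeff_mk]
    ring

/-! `∂` acts on `tⁿ` by multiplication with `n`; in characteristic zero it therefore kills
exactly the constant coefficient. So `∂ a ∈ tᵐA` forces `a - a₀ ∈ tᵐA`, and `∂` kills no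
nonzero element of `tA`, although `tA` is `∂`-stable because `∂ t = t`. -/

open PowerSeries

namespace eulerD

variable {k : Type*} [Field k]

@[simp]
lemma coeff_apply (f : PowerSeries k) (n : ℕ) :
    coeff n (eulerD k f) = (n : k) * coeff n f := by
  simp [eulerD]

lemma map_mul (f g : PowerSeries k) :
    eulerD k (f * g) = eulerD k f * g + f * eulerD k g := by
  ext n
  rw [map_add, coeff_apply, coeff_mul, coeff_mul, coeff_mul, Finset.mul_sum,
    ← Finset.sum_add_distrib]
  refine Finset.sum_congr rfl fun p hp => ?_
  rw [Finset.HasAntidiagonal.mem_antidiagonal] at hp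
  rw [coeff_apply, coeff_apply, ← hp]
  push_cast
  ring

lemma map_X : eulerD k X = X := by
  ext n
  rw [coeff_apply, coeff_X]
  split_ifs with h <;> simp [h]

lemma map_X_mul (g : PowerSeries k) : eulerD k (X * g) = X * (g + eulerD k g) := by
  rw [map_mul, map_X]
  ring

lemma map_C (c : k) : eulerD k (C c) = 0 := by
  ext n
  rw [coeff_apply, coeff_C]
  split_ifs with h <;> simp [h]

lemma coeff_eq_zero_of_coeff_apply_eq_zero [CharZero k] {f : PowerSeries k} {n : ℕ}
    (hn : n ≠ 0) (h : coeff n (eulerD k f) = 0) : coeff n f = 0 := by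
  rw [coeff_apply] at h
  exact (mul_eq_zero.mp h).resolve_left (Nat.cast_ne_zero.mpr hn)

lemma X_pow_dvd_sub_C_of_X_pow_dvd [CharZero k] {m : ℕ} {f : PowerSeries k}
    (h : X ^ m ∣ eulerD k f) : X ^ m ∣ f - C (constantCoeff f) := by
  rw [X_pow_dvd_iff] at h ⊢
  intro n hn
  rcases eq_or_ne n 0 with rfl | hn0
  · simp
  · rw [map_sub, coeff_C, if_neg hn0, sub_zero]
    exact coeff_eq_zero_of_coeff_apply_eq_zero hn0 (h n hn)

lemma eq_zero_iff [CharZero k] (f : PowerSeries k) :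
    eulerD k f = 0 ↔ ∃ c : k, f = C c := by
  refine ⟨fun h => ⟨constantCoeff f, ?_⟩, fun ⟨c, hc⟩ => hc ▸ map_C c⟩
  ext n
  rcases eq_or_ne n 0 with rfl | hn0
  · simp
  · rw [coeff_C, if_neg hn0]
    exact coeff_eq_zero_of_coeff_apply_eq_zero hn0 (by simp [h])

lemma map_mem_span_X {f : PowerSeries k} (hf : f ∈ Ideal.span {X}) :
    eulerD k f ∈ Ideal.span {X} := by
  obtain ⟨g, rfl⟩ := Ideal.mem_span_singleton.mp hf
  exact Ideal.mem_span_singleton.mpr ⟨_, map_X_mul g⟩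

lemma eq_zero_of_mem_span_X [CharZero k] {f : PowerSeries k} (hf : f ∈ Ideal.span {X})
    (h : eulerD k f = 0) : f = 0 := by
  obtain ⟨c, rfl⟩ := (eq_zero_iff f).mp h
  obtain ⟨g, hg⟩ := Ideal.mem_span_singleton.mp hf
  have hc : c = 0 := by simpa using congrArg constantCoeff hg
  simp [hc]

end eulerD

/-- Goodearl's example: for `A = k[[t]]` over a field `k` of characteristic zero and the
map `∂(Σ aₙ tⁿ) = Σ n aₙ tⁿ`: (i) `∂` is a derivation; (ii) `ker ∂ = k`; (iii) if
`∂(a) ∈ tᵐA` then `a ∈ k + tᵐA`; (iv) `tA` is a nonzero `∂`-stable ideal meeting `ker ∂`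
trivially, so `A` is not a retractable left `A[x;∂]`-module. -/
theorem goodearl_example {k : Type*} [Field k] [CharZero k] :
    (∀ f g : PowerSeries k, eulerD k (f * g) = eulerD k f * g + f * eulerD k g) ∧
    (∀ f : PowerSeries k, eulerD k f = 0 ↔ ∃ c : k, f = PowerSeries.C c) ∧
    (∀ m : ℕ, 1 ≤ m → ∀ f : PowerSeries k,
      (∃ g : PowerSeries k, eulerD k f = PowerSeries.X ^ m * g) →
        ∃ (c : k) (g : PowerSeries k), f = PowerSeries.C c + PowerSeries.X ^ m * g) ∧
    ((Ideal.span ({PowerSeries.X} : Set (PowerSeries k)) ≠ ⊥) ∧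
      (∀ f ∈ Ideal.span ({PowerSeries.X} : Set (PowerSeries k)),
        eulerD k f ∈ Ideal.span ({PowerSeries.X} : Set (PowerSeries k))) ∧
      (∀ f ∈ Ideal.span ({PowerSeries.X} : Set (PowerSeries k)), eulerD k f = 0 → f = 0) ∧
      ¬ (∀ I : Ideal (PowerSeries k), (∀ x ∈ I, eulerD k x ∈ I) → I ≠ ⊥ →
          ∃ c ∈ I, c ≠ 0 ∧ eulerD k c = 0)) := by
  have span_X_ne_bot : Ideal.span {(X : PowerSeries k)} ≠ ⊥ :=
    mt Ideal.span_singleton_eq_bot.mp X_ne_zero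
  refine ⟨eulerD.map_mul, eulerD.eq_zero_iff, ?_, span_X_ne_bot,
    fun _ => eulerD.map_mem_span_X, fun _ => eulerD.eq_zero_of_mem_span_X, ?_⟩
  · rintro m - f ⟨g, hg⟩
    obtain ⟨g', hg'⟩ := eulerD.X_pow_dvd_sub_C_of_X_pow_dvd ⟨g, hg⟩
    exact ⟨constantCoeff f, g', eq_add_of_sub_eq' hg'⟩
  · intro retractable
    obtain ⟨c, hc, hc0, hDc⟩ :=
      retractable _ (fun _ => eulerD.map_mem_span_X) span_X_ne_bot
    exact hc0 (eulerD.eq_zero_of_mem_span_X hc hDc)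
end

section
/- (Amitsur) Let A be a semiprime ring and M a left A-module that embeds into a direct product of copies of A (a torsionless module). Then M is retractable, i.e., Hom_A(M,N) ≠ 0 for every nonzero submodule N of M. -/
/-!
If `a ≠ 0` in a semiprime ring then `a * x * a ≠ 0` for some `x`, since otherwise the ideal
generated by `a` squares to zero. Given `0 ≠ n ∈ N`, torsionlessness yields a functional
`φ : M → A` with `φ n ≠ 0`; choosing `x` with `φ n * x * φ n ≠ 0`, the map `m ↦ (φ m * x) • n`
is a nonzero homomorphism `M → N`, as `φ` sends its value at `n` to `φ n * x * φ n`.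
-/

def IsSemiprimeRing (A : Type*) [Ring A] : Prop :=
  ∀ I : TwoSidedIdeal A, (∀ x ∈ I, ∀ y ∈ I, x * y = 0) → I = ⊥

namespace TwoSidedIdeal

variable {R : Type*} [Ring R] {a : R}

lemma mul_mul_eq_zero_of_mem_span_singleton (h : ∀ x, a * x * a = 0) {v : R}
    (hv : v ∈ span {a}) (x : R) : a * x * v = 0 := by
  induction hv using span_induction generalizing x with
  | mem y hy => rw [Set.mem_singleton_iff.mp hy, h]
  | zero => rw [mul_zero]
  | add y z _ _ hy hz => rw [mul_add, hy, hz, add_zero]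
  | neg y _ hy => rw [mul_neg, hy, neg_zero]
  | left_absorb b y _ hy => rw [← mul_assoc, mul_assoc a, hy]
  | right_absorb b y _ hy => rw [← mul_assoc, hy, zero_mul]

lemma mul_eq_zero_of_mem_span_singleton (h : ∀ x, a * x * a = 0) {u v : R}
    (hu : u ∈ span {a}) (hv : v ∈ span {a}) : u * v = 0 := by
  induction hu using span_induction generalizing v with
  | mem y hy =>
    rw [Set.mem_singleton_iff.mp hy, ← mul_one a]
    exact mul_mul_eq_zero_of_mem_span_singleton h hv 1
  | zero => rw [zero_mul]
  | add y z _ _ hy hz => rw [add_mul, hy hv, hz hv, add_zero]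
  | neg y _ hy => rw [neg_mul, hy hv, neg_zero]
  | left_absorb b y _ hy => rw [mul_assoc, hy hv, mul_zero]
  | right_absorb b y _ hy => rw [mul_assoc, hy (mul_mem_left _ b v hv)]

end TwoSidedIdeal

lemma IsSemiprimeRing.exists_mul_mul_ne_zero {A : Type*} [Ring A] (hA : IsSemiprimeRing A)
    {a : A} (ha : a ≠ 0) : ∃ x, a * x * a ≠ 0 := by
  by_contra! h
  have hspan : TwoSidedIdeal.span {a} = ⊥ := hA _ fun u hu v hv ↦
    TwoSidedIdeal.mul_eq_zero_of_mem_span_singleton h hu hv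
  exact ha <| (TwoSidedIdeal.mem_bot A).mp <| hspan ▸ TwoSidedIdeal.subset_span rfl

lemma IsSemiprimeRing.exists_linearMap_to_submodule_ne_zero {A M : Type*} [Ring A]
    [AddCommGroup M] [Module A M] (hA : IsSemiprimeRing A) (φ : M →ₗ[A] A)
    {N : Submodule A M} {n : M} (hn : n ∈ N) (hφn : φ n ≠ 0) :
    ∃ g : M →ₗ[A] N, g ≠ 0 := by
  obtain ⟨x, hx⟩ := hA.exists_mul_mul_ne_zero hφn
  refine ⟨LinearMap.toSpanSingleton A N (x • ⟨n, hn⟩) ∘ₗ φ, fun hg ↦ hx ?_⟩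
  have hgn : (φ n * x) • n = 0 := by
    simpa [mul_smul] using congrArg Subtype.val (LinearMap.congr_fun hg n)
  simpa [mul_assoc] using congrArg φ hgn

/-- Amitsur: a torsionless module over a semiprime ring is retractable. If `A` is a
semiprime ring and `M` embeds `A`-linearly into a direct product `ι → A` of copies of
`A`, then `Hom_A(M, N) ≠ 0` for every nonzero submodule `N` of `M`. -/
theorem torsionless_over_semiprime_retractable {A M : Type*} [Ring A] [AddCommGroup M]
    [Module A M] {ι : Type*}
    (hsemiprime : ∀ I : TwoSidedIdeal A, (∀ x ∈ I, ∀ y ∈ I, x * y = 0) → I = ⊥)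
    (f : M →ₗ[A] (ι → A)) (hf : Function.Injective f) :
    ∀ N : Submodule A M, N ≠ ⊥ → ∃ g : M →ₗ[A] N, g ≠ 0 := by
  intro N hN
  obtain ⟨n, hnN, hn⟩ := Submodule.exists_mem_ne_zero_of_ne_bot hN
  obtain ⟨i, hi⟩ := Function.ne_iff.mp ((map_ne_zero_iff f hf).mpr hn)
  exact IsSemiprimeRing.exists_linearMap_to_submodule_ne_zero hsemiprime
    (LinearMap.proj i ∘ₗ f) hnN hi
end

section
/- Let A be a ring and M a left A-module. If M is retractable and its endomorphism ring End_A(M) is a prime ring, then M is ∗-prime: for all nonzero submodules N and K of M there exists f ∈ Hom_A(M,K) with f(N) ≠ 0 (equivalently, N∗K = Σ_{f ∈ Hom_A(M,K)} f(N) is nonzero for all nonzero submodules N, K). -/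
/-!
Retractability gives nonzero endomorphisms `g` with image in `N` and `h` with image in `K`.
If every endomorphism with image in `K` killed `N`, then so would every `h * r`, whence
`h * r * g = 0` for all `r`; in a prime ring this forces `h = 0` or `g = 0`.
-/

namespace TwoSidedIdeal

variable {R : Type*} [Ring R]

def leftAnnihilator (I : TwoSidedIdeal R) : TwoSidedIdeal R :=
  .mk' {x | ∀ y ∈ I, x * y = 0} (fun y _ => zero_mul y)
    (fun hx hy z hz => by rw [add_mul, hx z hz, hy z hz, add_zero])
    (fun hx z hz => by rw [neg_mul, hx z hz, neg_zero])
    (fun hy z hz => by rw [mul_assoc, hy z hz, mul_zero])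
    (fun hx z hz => by rw [mul_assoc]; exact hx _ (I.mul_mem_left _ _ hz))

theorem mem_leftAnnihilator {I : TwoSidedIdeal R} {x : R} :
    x ∈ I.leftAnnihilator ↔ ∀ y ∈ I, x * y = 0 :=
  mem_mk' ..

def rightAnnihilatorSpanSingleton (a : R) : TwoSidedIdeal R :=
  .mk' {y | ∀ r, a * r * y = 0} (fun _ => mul_zero _)
    (fun hx hy r => by rw [mul_add, hx r, hy r, add_zero])
    (fun hx r => by rw [mul_neg, hx r, neg_zero])
    (fun hy r => by rw [← mul_assoc, mul_assoc a, hy])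
    (fun hx r => by rw [← mul_assoc, hx r, zero_mul])

theorem mem_rightAnnihilatorSpanSingleton {a y : R} :
    y ∈ rightAnnihilatorSpanSingleton a ↔ ∀ r, a * r * y = 0 :=
  mem_mk' ..

theorem eq_zero_or_eq_zero_of_forall_mul_mul_eq_zero
    (hprime : ∀ I J : TwoSidedIdeal R, (∀ x ∈ I, ∀ y ∈ J, x * y = 0) → I = ⊥ ∨ J = ⊥)
    {a b : R} (hab : ∀ r, a * r * b = 0) : a = 0 ∨ b = 0 := by
  set J := rightAnnihilatorSpanSingleton a
  have ha : a ∈ J.leftAnnihilator := mem_leftAnnihilator.2 fun y hy => by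
    simpa using mem_rightAnnihilatorSpanSingleton.1 hy 1
  have hb : b ∈ J := mem_rightAnnihilatorSpanSingleton.2 hab
  rcases hprime J.leftAnnihilator J fun x hx => mem_leftAnnihilator.1 hx with hJ | hJ
  · exact .inl <| (mem_bot R).1 (hJ ▸ ha)
  · exact .inr <| (mem_bot R).1 (hJ ▸ hb)

end TwoSidedIdeal

theorem Module.End.mul_mul_eq_zero_of_forall_map_eq_bot {A M : Type*} [Ring A] [AddCommGroup M]
    [Module A M] {N K : Submodule A M}
    (hNK : ∀ f : Module.End A M, LinearMap.range f ≤ K → N.map f = ⊥)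
    {h g : Module.End A M} (hh : LinearMap.range h ≤ K) (hg : LinearMap.range g ≤ N)
    (r : Module.End A M) : h * r * g = 0 := by
  have hhr : LinearMap.range (h * r) ≤ K := (LinearMap.range_comp_le_range r h).trans hh
  have hkill : N ≤ LinearMap.ker (h * r) := LinearMap.le_ker_iff_map.2 (hNK _ hhr)
  ext m
  exact hkill (hg ⟨m, rfl⟩)

/-- If `M` is a retractable left `A`-module whose endomorphism ring is a prime ring, then
`M` is `∗`-prime: for all nonzero submodules `N, K` of `M` there is `f ∈ Hom(M,K)` with
`f(N) ≠ 0`. -/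
theorem starPrime_of_retractable_prime_endomorphism_ring {A M : Type*} [Ring A]
    [AddCommGroup M] [Module A M]
    (hret : ∀ N : Submodule A M, N ≠ ⊥ →
      ∃ f : M →ₗ[A] M, LinearMap.range f ≤ N ∧ f ≠ 0)
    (hprime : ∀ I J : TwoSidedIdeal (Module.End A M),
      (∀ x ∈ I, ∀ y ∈ J, x * y = 0) → I = ⊥ ∨ J = ⊥) :
    ∀ N K : Submodule A M, N ≠ ⊥ → K ≠ ⊥ →
      ∃ f : M →ₗ[A] M, LinearMap.range f ≤ K ∧ Submodule.map f N ≠ ⊥ := by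
  intro N K hN hK
  by_contra! hNK
  obtain ⟨g, hgN, hg0⟩ := hret N hN
  obtain ⟨h, hhK, hh0⟩ := hret K hK
  rcases TwoSidedIdeal.eq_zero_or_eq_zero_of_forall_mul_mul_eq_zero hprime
    (Module.End.mul_mul_eq_zero_of_forall_map_eq_bot hNK hhK hgN) with h0 | g0
  exacts [hh0 h0, hg0 g0]
end
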